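/- arXiv:1111.2091 — 3 statements merged into one kernel-verified Lean document; each statement's English description precedes it below -/
import Mathlib

section
/- Let $L_1,\ldots,L_n$ be real numbers with distinct values, let $\beta\in(0.5,1)$, and let $\varepsilon_n$ be a constant with $0<\varepsilon_n<(n-\lceil n\beta\rceil+1)^{-1}$. Then the function $G_n(\alpha)=(1-\varepsilon_n)\alpha+\frac{1}{n-\lceil n\beta\rceil+1}\sum_{i=1}^n(L_i-\alpha)^+$ has a unique minimizer over $\alpha\in\mathbb{R}$, namely $\alpha^*=L_{(\lceil n\beta\rceil)}$, the $\lceil n\beta\rceil$-th order statistic of $L_1,\ldots,L_n$. -/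
/-!
Write `S(α) = ∑ᵢ (Lᵢ - α)⁺` and `m = n - k + 1`. Moving `α` up from `a` to `x` lowers each
term by at most `x - a`, and only the terms with `Lᵢ > a` move at all; moving it down from `a`
to `x` raises each term with `Lᵢ ≥ a` by exactly `a - x`. At `a = L₍ₖ₎` there are `m - 1` values
above `a` and `m` values at least `a`, so `G` has slope at least `1/m - ε > 0` to the right of
`a` and at most `-ε < 0` to its left.
-/

open Finset

section PosPartSum

variable {ι : Type*} (s : Finset ι) (f : ι → ℝ) {x y : ℝ}

lemma sum_max_sub_le_add_card_mul (hxy : x ≤ y) :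
    ∑ i ∈ s, max (f i - x) 0 ≤ ∑ i ∈ s, max (f i - y) 0 + #{i ∈ s | x < f i} * (y - x) := by
  rw [card_filter, Nat.cast_sum, sum_mul, ← sum_add_distrib]
  refine sum_le_sum fun i _ => ?_
  split_ifs with h
  · simp only [Nat.cast_one, one_mul]
    exact max_le (by linarith [le_max_left (f i - y) 0]) (by linarith [le_max_right (f i - y) 0])
  · simp only [Nat.cast_zero, zero_mul, add_zero]
    rw [max_eq_right (by linarith [not_lt.mp h])]
    exact le_max_right _ _

lemma sum_max_sub_add_card_mul_le (hxy : x ≤ y) :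
    ∑ i ∈ s, max (f i - y) 0 + #{i ∈ s | y ≤ f i} * (y - x) ≤ ∑ i ∈ s, max (f i - x) 0 := by
  rw [card_filter, Nat.cast_sum, sum_mul, ← sum_add_distrib]
  refine sum_le_sum fun i _ => ?_
  split_ifs with h
  · simp only [Nat.cast_one, one_mul]
    rw [max_eq_left (by linarith), max_eq_left (by linarith)]
    linarith
  · simp only [Nat.cast_zero, zero_mul, add_zero]
    exact max_le_max (by linarith) le_rfl

lemma add_sum_max_sub_div_lt {ε m a : ℝ} (hε : 0 < ε ∧ ε < m⁻¹)
    (hgt : (#{i ∈ s | a < f i} : ℝ) + 1 ≤ m) (hge : m ≤ #{i ∈ s | a ≤ f i}) (hx : x ≠ a) :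
    (1 - ε) * a + (∑ i ∈ s, max (f i - a) 0) / m
      < (1 - ε) * x + (∑ i ∈ s, max (f i - x) 0) / m := by
  have hm : 0 < m := by linarith [(#{i ∈ s | a < f i}).cast_nonneg (α := ℝ)]
  have hεm : ε * m < 1 := by simpa [hm.ne'] using mul_lt_mul_of_pos_right hε.2 hm
  rw [← sub_pos, ← mul_lt_mul_iff_of_pos_left hm, mul_zero]
  have expand : m * ((1 - ε) * x + (∑ i ∈ s, max (f i - x) 0) / m
      - ((1 - ε) * a + (∑ i ∈ s, max (f i - a) 0) / m))
      = (1 - ε) * m * (x - a) + (∑ i ∈ s, max (f i - x) 0 - ∑ i ∈ s, max (f i - a) 0) := by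
    field_simp
    ring
  rw [expand]
  rcases hx.lt_or_gt with hxa | hax
  · have rise := sum_max_sub_add_card_mul_le s f hxa.le
    linarith [mul_le_mul_of_nonneg_right hge (sub_nonneg.mpr hxa.le),
      mul_pos (mul_pos hε.1 hm) (sub_pos.mpr hxa)]
  · have fall := sum_max_sub_le_add_card_mul s f hax.le
    linarith [mul_le_mul_of_nonneg_right (le_sub_iff_add_le.mpr hgt) (sub_nonneg.mpr hax.le),
      mul_pos (sub_pos.mpr hεm) (sub_pos.mpr hax)]

end PosPartSum

section OrderStatistic

variable {n : ℕ} {L : Fin n → ℝ} {σ : Equiv.Perm (Fin n)}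

lemma card_lt_apply_of_strictMono (hσ : StrictMono (fun i => L (σ i))) (j : Fin n) :
    #{i | L (σ j) < L i} = n - 1 - j := by
  rw [← Fin.card_Ioi, card_equiv σ.symm]
  intro i
  simpa using hσ.lt_iff_lt (a := j) (b := σ.symm i)

lemma card_le_apply_of_strictMono (hσ : StrictMono (fun i => L (σ i))) (j : Fin n) :
    #{i | L (σ j) ≤ L i} = n - j := by
  rw [← Fin.card_Ici, card_equiv σ.symm]
  intro i
  simpa using hσ.le_iff_le (a := j) (b := σ.symm i)

end OrderStatistic

theorem stmt0 (n : ℕ) (ε : ℝ)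
    (L : Fin n → ℝ) (σ : Equiv.Perm (Fin n)) (hσ : StrictMono (fun i => L (σ i)))
    (k : ℕ) (hk1 : 1 ≤ k) (hkn : k ≤ n)
    (hε : 0 < ε ∧ ε < ((n : ℝ) - k + 1)⁻¹) :
    ∀ G : ℝ → ℝ,
      (G = fun α => (1 - ε) * α + (∑ i, max (L i - α) 0) / ((n : ℝ) - k + 1)) →
      ((∀ α, G (L (σ ⟨k - 1, by omega⟩)) ≤ G α) ∧
        (∀ α, G α = G (L (σ ⟨k - 1, by omega⟩)) → α = L (σ ⟨k - 1, by omega⟩))) := by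
  rintro G rfl
  set a := L (σ ⟨k - 1, by omega⟩)
  have strictMin : ∀ α, α ≠ a → (1 - ε) * a + (∑ i, max (L i - a) 0) / ((n : ℝ) - k + 1)
      < (1 - ε) * α + (∑ i, max (L i - α) 0) / ((n : ℝ) - k + 1) := by
    refine fun α => add_sum_max_sub_div_lt _ _ hε ?_ ?_
    · rw [card_lt_apply_of_strictMono hσ, Nat.cast_sub (by simp; omega)]
      push_cast [Nat.cast_sub (by omega : 1 ≤ n), Nat.cast_sub hk1]
      linarith
    · rw [card_le_apply_of_strictMono hσ, Nat.cast_sub (by simp; omega)]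
      push_cast [Nat.cast_sub hk1]
      linarith
  refine ⟨fun α => ?_, fun α hα => ?_⟩
  · rcases eq_or_ne α a with rfl | hne
    · exact le_rfl
    · exact (strictMin α hne).le
  · by_contra hne
    exact (strictMin α hne).ne' hα
end

section
/- Let $L_1,\ldots,L_n$ be distinct reals, $\beta\in(0.5,1)$, $k=\lceil n\beta\rceil$, and $0<\varepsilon_n<(n-k+1)^{-1}$. For $m\in\{-k+1,\ldots,n-k\}$, define $\Delta(m)=G_n(L_{(k+m+1)})-G_n(L_{(k+m)})$ where $G_n(\alpha)=(1-\varepsilon_n)\alpha+\frac{1}{n-k+1}\sum_{i=1}^n(L_i-\alpha)^+$. Then $\Delta(m)=(L_{(k+m+1)}-L_{(k+m)})\big((1-\varepsilon_n)-\frac{n-k-m}{n-k+1}\big)$; in particular $\Delta(0)>0$ and $\Delta(-1)<0$. -/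
/-! On the gap between two consecutive order statistics `L₍j₎ < L₍j+1₎` no `Lᵢ` lies strictly
inside, so `α ↦ ∑ᵢ (Lᵢ - α)⁺` is affine there, with slope minus the number `n - j` of indices
with `Lᵢ ≥ L₍j+1₎`. This gives the formula for `Δ(m)`; its coefficient is
`(n - k + 1)⁻¹ - ε > 0` at `m = 0` and `-ε < 0` at `m = -1`. -/

open Finset

lemma max_sub_sub_max_sub_eq_ite {x a b : ℝ} (hab : a ≤ b) (hx : x ≤ a ∨ b ≤ x) :
    max (x - b) 0 - max (x - a) 0 = if b ≤ x then a - b else 0 := by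
  split_ifs with hbx
  · rw [max_eq_left (by linarith), max_eq_left (by linarith)]
    ring
  · have hxa : x ≤ a := hx.resolve_right hbx
    rw [max_eq_right (by linarith), max_eq_right (by linarith), sub_zero]

lemma Finset.sum_max_sub_sub_sum_max_sub {ι : Type*} (s : Finset ι) (x : ι → ℝ) {a b : ℝ}
    (hab : a ≤ b) (hgap : ∀ i ∈ s, x i ≤ a ∨ b ≤ x i) :
    ∑ i ∈ s, max (x i - b) 0 - ∑ i ∈ s, max (x i - a) 0
      = -(#{i ∈ s | b ≤ x i} : ℝ) * (b - a) := by
  classical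
  rw [← sum_sub_distrib, sum_congr rfl fun i hi => max_sub_sub_max_sub_eq_ite hab (hgap i hi),
    ← sum_filter, sum_const, nsmul_eq_mul]
  ring

lemma StrictMono.sum_max_sub_sub_sum_max_sub_of_succ {n : ℕ} {f : Fin n → ℝ} (hf : StrictMono f)
    {i j : Fin n} (hij : (i : ℕ) + 1 = j) :
    ∑ l, max (f l - f j) 0 - ∑ l, max (f l - f i) 0 = -((n : ℝ) - j) * (f j - f i) := by
  have hlt : i < j := Fin.lt_def.mpr (by omega)
  have hgap : ∀ l ∈ univ, f l ≤ f i ∨ f j ≤ f l := by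
    intro l _
    rcases le_or_gt l i with h | h
    · exact Or.inl (hf.monotone h)
    · exact Or.inr (hf.monotone (Fin.le_def.mpr (by rw [Fin.lt_def] at h; omega)))
  have hcard : #{l | f j ≤ f l} = n - j := by
    simp_rw [hf.le_iff_le, filter_le_eq_Ici, Fin.card_Ici]
  rw [sum_max_sub_sub_sum_max_sub _ _ (hf hlt).le hgap, hcard, Nat.cast_sub j.is_lt.le]

lemma consecutive_order_statistics_increment {n : ℕ} (L : Fin n → ℝ) (σ : Equiv.Perm (Fin n))
    (hσ : StrictMono (fun i => L (σ i))) (c d : ℝ) (hd : d ≠ 0) (G : ℝ → ℝ)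
    (hG : G = fun α => c * α + (∑ l, max (L l - α) 0) / d) {i j : Fin n} (hij : (i : ℕ) + 1 = j) :
    G (L (σ j)) - G (L (σ i)) = (L (σ j) - L (σ i)) * (c - ((n : ℝ) - j) / d) := by
  have hsum := hσ.sum_max_sub_sub_sum_max_sub_of_succ hij
  rw [Equiv.sum_comp σ fun l => max (L l - L (σ j)) 0,
    Equiv.sum_comp σ fun l => max (L l - L (σ i)) 0] at hsum
  subst hG
  field_simp
  linear_combination hsum

/-- With distinct reals `L`, `k = ⌈nβ⌉`, `0 < ε < (n-k+1)⁻¹` and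
`G(α) = (1-ε)α + (n-k+1)⁻¹ ∑ᵢ (Lᵢ-α)⁺`, the difference
`Δ(m) = G(L₍k+m+1₎) - G(L₍k+m₎)` equals
`(L₍k+m+1₎ - L₍k+m₎)((1-ε) - (n-k-m)/(n-k+1))` for all valid `m`;
in particular `Δ(0) > 0` and `Δ(-1) < 0`. -/
theorem stmt2 (n : ℕ) (ε : ℝ)
    (L : Fin n → ℝ) (σ : Equiv.Perm (Fin n)) (hσ : StrictMono (fun i => L (σ i)))
    (k : ℕ) (hk1 : 1 ≤ k) (hkn : k ≤ n)
    (hε : 0 < ε ∧ ε < ((n : ℝ) - k + 1)⁻¹) :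
    ∀ G : ℝ → ℝ,
      (G = fun α => (1 - ε) * α + (∑ i, max (L i - α) 0) / ((n : ℝ) - k + 1)) →
      ((∀ m : ℤ, ∀ h1 : 1 - (k : ℤ) ≤ m, ∀ h2 : m ≤ (n : ℤ) - k - 1,
          G (L (σ ⟨((k : ℤ) + m).toNat, by omega⟩))
            - G (L (σ ⟨((k : ℤ) + m).toNat - 1, by omega⟩))
          = (L (σ ⟨((k : ℤ) + m).toNat, by omega⟩)
              - L (σ ⟨((k : ℤ) + m).toNat - 1, by omega⟩))
            * ((1 - ε) - ((n : ℝ) - k - (m : ℝ)) / ((n : ℝ) - k + 1)))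
      ∧ (∀ h : k < n,
          0 < G (L (σ ⟨k, h⟩)) - G (L (σ ⟨k - 1, by omega⟩)))
      ∧ (∀ h : 2 ≤ k,
          G (L (σ ⟨k - 1, by omega⟩)) - G (L (σ ⟨k - 2, by omega⟩)) < 0)) := by
  intro G hG
  have hd : (0 : ℝ) < (n : ℝ) - k + 1 := by linarith [(Nat.cast_le.mpr hkn : (k : ℝ) ≤ n)]
  have hΔ {i j : Fin n} (hij : (i : ℕ) + 1 = j) :=
    consecutive_order_statistics_increment L σ hσ (1 - ε) _ hd.ne' G hG hij
  refine ⟨fun m h1 h2 => ?_, fun h => ?_, fun h => ?_⟩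
  · rw [hΔ (by simp only; omega)]
    have hj : ((((k : ℤ) + m).toNat : ℕ) : ℝ) = k + m := by
      exact_mod_cast Int.toNat_of_nonneg (by omega : 0 ≤ (k : ℤ) + m)
    simp only [hj, sub_add_eq_sub_sub]
  · rw [hΔ (by simp only; omega)]
    have hlt : L (σ ⟨k - 1, by omega⟩) < L (σ ⟨k, h⟩) :=
      hσ (Fin.lt_def.mpr (by simp only; omega))
    have hcoef : 0 < (1 - ε) - ((n : ℝ) - k) / ((n : ℝ) - k + 1) := by
      have : (1 - ε) - ((n : ℝ) - k) / ((n : ℝ) - k + 1) = ((n : ℝ) - k + 1)⁻¹ - ε := by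
        field_simp; ring
      rw [this]; linarith [hε.2]
    exact mul_pos (sub_pos.mpr hlt) hcoef
  · rw [hΔ (by simp only; omega)]
    have hlt : L (σ ⟨k - 2, by omega⟩) < L (σ ⟨k - 1, by omega⟩) :=
      hσ (Fin.lt_def.mpr (by simp only; omega))
    have hcoef : (1 - ε) - ((n : ℝ) - ((k - 1 : ℕ) : ℝ)) / ((n : ℝ) - k + 1) = -ε := by
      rw [Nat.cast_sub hk1, Nat.cast_one, sub_sub_eq_add_sub, add_sub_right_comm, div_self hd.ne']
      ring
    simp only [hcoef]
    exact mul_neg_of_pos_of_neg (sub_pos.mpr hlt) (neg_neg_of_pos hε.1)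
end

section
/- If $\varepsilon_n=0$, the minimizer of $\alpha\mapsto\alpha+\frac{1}{n-\lceil n\beta\rceil+1}\sum_{i=1}^n(L_i-\alpha)^+$ over $\mathbb{R}$ is not unique: both $\alpha=L_{(\lceil n\beta\rceil)}$ and $\alpha=L_{(\lceil n\beta\rceil-1)}$ attain the minimum (assuming $\lceil n\beta\rceil\ge 2$ and the $L_i$ are distinct). -/
/-!
The function `G α = α + (∑ᵢ (Lᵢ - α)⁺) / m`, with `m = n - k + 1`, is bounded below by the mean
of the `m` largest values: dropping the positive parts outside the top `m` and the `max` inside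
them gives `m α + ∑ᵢ (Lᵢ - α)⁺ ≥ ∑_{top m} Lᵢ`. Equality holds for every `α` lying between the
`m` largest values and the others, i.e. on the whole interval `[L₍ₖ₋₁₎, L₍ₖ₎]`, so both endpoints
are minimizers.
-/

open Finset

section LinearOrder

variable {ι M : Type*} [Fintype ι] [AddCommGroup M] [LinearOrder M] [IsOrderedAddMonoid M]

theorem sum_le_card_nsmul_add_sum_max_sub (x : ι → M) (S : Finset ι) (a : M) :
    ∑ i ∈ S, x i ≤ #S • a + ∑ i, max (x i - a) 0 := by
  have hS : ∑ i ∈ S, (x i - a) ≤ ∑ i, max (x i - a) 0 :=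
    (sum_le_sum fun i _ => le_max_left _ _).trans
      (sum_le_sum_of_subset_of_nonneg (subset_univ S) fun i _ _ => le_max_right _ _)
  rw [sum_sub_distrib, sum_const] at hS
  rwa [← sub_le_iff_le_add']

theorem card_nsmul_add_sum_max_sub_eq {x : ι → M} {S : Finset ι} {a : M}
    (hout : ∀ i ∉ S, x i ≤ a) (hin : ∀ i ∈ S, a ≤ x i) :
    #S • a + ∑ i, max (x i - a) 0 = ∑ i ∈ S, x i := by
  have hsplit : ∑ i, max (x i - a) 0 = ∑ i ∈ S, (x i - a) := by
    rw [← sum_subset (subset_univ S) fun i _ hi => max_eq_right (sub_nonpos.2 (hout i hi))]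
    exact sum_congr rfl fun i hi => max_eq_left (sub_nonneg.2 (hin i hi))
  rw [hsplit, sum_sub_distrib, sum_const, add_sub_cancel]

end LinearOrder

section Real

variable {ι : Type*} [Fintype ι]

theorem sum_div_card_le_add_sum_max_sub_div (x : ι → ℝ) {S : Finset ι} (hS : S.Nonempty)
    (a : ℝ) : (∑ i ∈ S, x i) / #S ≤ a + (∑ i, max (x i - a) 0) / #S := by
  have hcard : (0 : ℝ) < #S := by exact_mod_cast hS.card_pos
  have key := sum_le_card_nsmul_add_sum_max_sub x S a
  rw [nsmul_eq_mul] at key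
  rw [div_le_iff₀ hcard, add_mul, div_mul_cancel₀ _ hcard.ne']
  linarith

theorem add_sum_max_sub_div_eq {x : ι → ℝ} {S : Finset ι} (hS : S.Nonempty) {a : ℝ}
    (hout : ∀ i ∉ S, x i ≤ a) (hin : ∀ i ∈ S, a ≤ x i) :
    a + (∑ i, max (x i - a) 0) / #S = (∑ i ∈ S, x i) / #S := by
  have hcard : (#S : ℝ) ≠ 0 := by exact_mod_cast hS.card_pos.ne'
  rw [← card_nsmul_add_sum_max_sub_eq hout hin, nsmul_eq_mul]
  field_simp

end Real

theorem separates_map_Ici {n : ℕ} {L : Fin n → ℝ} {σ : Equiv.Perm (Fin n)}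
    (hσ : Monotone fun i => L (σ i)) {a c : Fin n} (hca : c ≤ a) (hgap : ∀ j < a, j ≤ c) :
    (∀ i ∉ (Ici a).map σ.toEmbedding, L i ≤ L (σ c)) ∧
      ∀ i ∈ (Ici a).map σ.toEmbedding, L (σ c) ≤ L i := by
  simp only [mem_map_equiv, mem_Ici, not_le]
  refine ⟨fun i hi => ?_, fun i hi => ?_⟩
  · simpa using hσ (hgap _ hi)
  · simpa using hσ (hca.trans hi)

/-- If `ε = 0`, the minimizer of
`α ↦ α + (n-⌈nβ⌉+1)⁻¹ ∑ᵢ (Lᵢ-α)⁺` over ℝ is not unique: both `L₍⌈nβ⌉₎` and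
`L₍⌈nβ⌉-1₎` attain the minimum (assuming `⌈nβ⌉ ≥ 2` and distinct `Lᵢ`). -/
theorem stmt3 (n : ℕ) (L : Fin n → ℝ) (σ : Equiv.Perm (Fin n))
    (hσ : StrictMono (fun i => L (σ i)))
    (k : ℕ) (hk2 : 2 ≤ k) (hkn : k ≤ n) :
    ∀ G : ℝ → ℝ,
      (G = fun α => α + (∑ i, max (L i - α) 0) / ((n : ℝ) - k + 1)) →
      ((∀ α, G (L (σ ⟨k - 1, by omega⟩)) ≤ G α) ∧
        (∀ α, G (L (σ ⟨k - 2, by omega⟩)) ≤ G α) ∧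
        G (L (σ ⟨k - 1, by omega⟩)) = G (L (σ ⟨k - 2, by omega⟩)) ∧
        L (σ ⟨k - 1, by omega⟩) ≠ L (σ ⟨k - 2, by omega⟩)) := by
  rintro G rfl
  set a : Fin n := ⟨k - 1, by omega⟩
  set b : Fin n := ⟨k - 2, by omega⟩
  have hba : b < a := Fin.lt_def.2 (by simp [a, b]; omega)
  set S := (Ici a).map σ.toEmbedding
  have hS : S.Nonempty := ⟨σ a, mem_map_equiv.2 (by simp)⟩
  have hcard : ((n : ℝ) - k + 1) = #S := by
    rw [card_map, Fin.card_Ici, Nat.cast_sub (by simp [a]; omega)]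
    simp only [a, Nat.cast_sub (by omega : 1 ≤ k)]
    ring
  simp only [hcard]
  have ha := separates_map_Ici hσ.monotone (le_refl a) fun _ hj => hj.le
  have hb := separates_map_Ici hσ.monotone hba.le fun j hj =>
    Fin.le_def.2 (by have := Fin.lt_def.1 hj; simp [a, b] at this ⊢; omega)
  rw [add_sum_max_sub_div_eq hS ha.1 ha.2, add_sum_max_sub_div_eq hS hb.1 hb.2]
  exact ⟨sum_div_card_le_add_sum_max_sub_div L hS, sum_div_card_le_add_sum_max_sub_div L hS,
    rfl, (hσ hba).ne'⟩
end
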